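/- The ring S' = F[[x,y,z]]/(z² - x², zx - x², yz) is local, and the quotient S'/(x+y)S' is isomorphic to F[[x,z]]/(z², zx, x²), which has a two-dimensional socle over F (hence S'/(x+y)S' is not Gorenstein). -/

import Mathlib

set_option synthInstance.maxHeartbeats 1000000
set_option maxHeartbeats 1000000

noncomputable section

variable (F : Type*) [Field F]

/-- The E-infinity singularity `S' = F[[x,y,z]]/(z² - x², zx - x², yz)`. -/
abbrev Einf : Type _ :=
  MvPowerSeries (Fin 3) F ⧸
    (Ideal.span
      {(MvPowerSeries.X (2 : Fin 3)) ^ 2 - (MvPowerSeries.X 0) ^ 2,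
       MvPowerSeries.X (2 : Fin 3) * MvPowerSeries.X 0 - (MvPowerSeries.X 0) ^ 2,
       MvPowerSeries.X (1 : Fin 3) * MvPowerSeries.X 2} :
      Ideal (MvPowerSeries (Fin 3) F))

/-- The image of `x` in `S'`. -/
abbrev xE : Einf F := Ideal.Quotient.mk _ (MvPowerSeries.X 0)
/-- The image of `y` in `S'`. -/
abbrev yE : Einf F := Ideal.Quotient.mk _ (MvPowerSeries.X 1)

/-- The ring `T = F[[x,z]]/(z², zx, x²)`. -/
abbrev Tring : Type _ :=
  MvPowerSeries (Fin 2) F ⧸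
    (Ideal.span
      {(MvPowerSeries.X (1 : Fin 2)) ^ 2,
       MvPowerSeries.X (1 : Fin 2) * MvPowerSeries.X 0,
       (MvPowerSeries.X (0 : Fin 2)) ^ 2} :
      Ideal (MvPowerSeries (Fin 2) F))

/-- The image of `x` in `T`. -/
abbrev xT : Tring F := Ideal.Quotient.mk _ (MvPowerSeries.X 0)
/-- The image of `z` in `T`. -/
abbrev zT : Tring F := Ideal.Quotient.mk _ (MvPowerSeries.X 1)

/-- The socle of `T`: the annihilator of the maximal ideal `(x, z)`, as an
`F`-subspace of `T`. -/
abbrev socT : Submodule F (Tring F) :=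
  LinearMap.ker (LinearMap.mulLeft F (xT F)) ⊓ LinearMap.ker (LinearMap.mulLeft F (zT F))

/-!
Both `S'/(x+y)` and `T` are quotients of a power series ring by ideals containing the square of
the ideal `m` of the variables, so the first-order Taylor expansion `f ↦ f(0) + ε ∇f(0)` maps each
isomorphically onto the trivial square-zero extension `F ⊕ F²`. For `T` the kernel of the expansion
is `m²`; for `S'` one composes with the linear substitution `y = -x`, and the kernel becomes
`m² + (x + y)` because `yz = 0` and `y = -x` give `xz = 0`, hence `x² = zx = 0` and `z² = x² = 0`.
In `F ⊕ F²` the annihilator of the maximal ideal `0 ⊕ F²` is `0 ⊕ F²`, which is two-dimensional.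
-/

namespace MvPowerSeries

variable {σ R : Type*} [CommRing R]

theorem mem_span_range_X_pow_of_coeff_eq_zero [Finite σ] {n : ℕ} {f : MvPowerSeries σ R}
    (hf : ∀ x : σ →₀ ℕ, x.degree < n → coeff x f = 0) :
    f ∈ Ideal.span (Set.range X) ^ n := by
  set I := MvPolynomial.idealOfVars σ R
  let Φ := toAdicCompletionAlgEquiv σ R
  have htrunc : truncTotal n f = 0 := by
    ext x
    rw [coeff_truncTotal_eq_ite]
    split_ifs with h <;> simp [hf x, h]
  -- `R[[X]]` is the `I`-adic completion of `R[X]`, and for finitely generated `I` the kernel of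
  -- its projection to `R[X] ⧸ I ^ n` is `I ^ n` times the completion.
  have hker :
      Φ f ∈ I ^ n • (⊤ : Submodule (MvPolynomial σ R) (AdicCompletion I (MvPolynomial σ R))) := by
    rw [AdicCompletion.pow_smul_top_eq_ker_eval (MvPolynomial.idealOfVars_fg σ R),
      LinearMap.mem_ker, AdicCompletion.eval_apply]
    simp [Φ, toAdicCompletion_apply_eq_mk_truncTotal, htrunc]
  have hmap : I.map (algebraMap (MvPolynomial σ R) (MvPowerSeries σ R)) =
      Ideal.span (Set.range X) := by
    rw [Ideal.map_span, ← Set.range_comp]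
    congr 2
    funext i
    exact MvPolynomial.coe_X (R := R) i
  rw [← AlgEquiv.symm_apply_apply Φ f, ← hmap,
    ← Ideal.map_pow (algebraMap (MvPolynomial σ R) (MvPowerSeries σ R))]
  refine Submodule.smul_induction_on hker (fun r hr y _ => ?_) (fun a b ha hb => ?_)
  · rw [map_smul, Algebra.smul_def]
    exact Ideal.mul_mem_right _ _ (Ideal.mem_map_of_mem _ hr)
  · rw [map_add]
    exact add_mem ha hb

theorem span_range_X_sq_le {J : Ideal (MvPowerSeries σ R)} (h : ∀ i j, X i * X j ∈ J) :
    Ideal.span (Set.range X) ^ 2 ≤ J := by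
  rw [pow_two, Ideal.span_mul_span', Ideal.span_le]
  rintro _ ⟨_, ⟨i, rfl⟩, _, ⟨j, rfl⟩, rfl⟩
  exact h i j

theorem X_mul_X_mem_span_range_X_sq (i j : σ) :
    X i * X j ∈ (Ideal.span (Set.range X) ^ 2 : Ideal (MvPowerSeries σ R)) := by
  rw [pow_two]
  exact Ideal.mul_mem_mul (Ideal.subset_span ⟨i, rfl⟩) (Ideal.subset_span ⟨j, rfl⟩)

theorem X_sq_mem_span_range_X_sq (i : σ) :
    X i ^ 2 ∈ (Ideal.span (Set.range X) ^ 2 : Ideal (MvPowerSeries σ R)) :=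
  Ideal.pow_mem_pow (Ideal.subset_span (Set.mem_range_self i)) 2

open TrivSqZeroExt

variable (σ R) in
def firstOrderJet : MvPowerSeries σ R →ₐ[R] TrivSqZeroExt R (σ → R) where
  toFun f := inl (constantCoeff f) + inr fun i => constantCoeff (pderiv R i f)
  map_one' := by ext <;> simp
  map_mul' f g := by ext <;> simp [add_comm]
  map_zero' := by ext <;> simp
  map_add' f g := by ext <;> simp [add_add_add_comm]
  commutes' r := by ext <;> simp [algebraMap_apply, algebraMap_eq_inl]

@[simp]
theorem fst_firstOrderJet (f : MvPowerSeries σ R) :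
    (firstOrderJet σ R f).fst = constantCoeff f := by
  simp [firstOrderJet]

@[simp]
theorem snd_firstOrderJet [DecidableEq σ] (f : MvPowerSeries σ R) (i : σ) :
    (firstOrderJet σ R f).snd i = coeff (Finsupp.single i 1) f := by
  simp [firstOrderJet, ← coeff_zero_eq_constantCoeff, coeff_pderiv]

theorem firstOrderJet_X [DecidableEq σ] (i : σ) :
    firstOrderJet σ R (X i) = inr (Pi.single i 1) := by
  ext j
  · simp
  · simp [coeff_X, Finsupp.single_left_inj one_ne_zero, Pi.single_apply]

theorem ker_firstOrderJet [Finite σ] :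
    RingHom.ker (firstOrderJet σ R) = Ideal.span (Set.range X) ^ 2 := by
  classical
  refine le_antisymm (fun f hf => mem_span_range_X_pow_of_coeff_eq_zero fun x hx => ?_)
    (span_range_X_sq_le fun i j => by simp [firstOrderJet_X])
  replace hf : firstOrderJet σ R f = 0 := hf
  obtain hx | hx : x.degree = 0 ∨ x.degree = 1 := by omega
  · rw [Finsupp.degree_eq_zero_iff] at hx
    simpa [hx] using congrArg fst hf
  · obtain ⟨i, rfl⟩ : x ∈ Set.range (Finsupp.single · 1) := Finsupp.range_single_one ▸ hx
    simpa using congrFun (congrArg snd hf) i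

theorem firstOrderJet_surjective [Fintype σ] : Function.Surjective (firstOrderJet σ R) := by
  classical
  intro p
  refine ⟨C p.fst + ∑ i, p.snd i • X i, ?_⟩
  simp only [map_add, map_sum, map_smul, firstOrderJet_X, ← inr_smul, ← inr_sum]
  rw [c_eq_algebraMap, AlgHom.commutes, algebraMap_eq_inl, ← pi_eq_sum_univ',
    inl_fst_add_inr_snd_eq]

end MvPowerSeries

namespace TrivSqZeroExt

variable {R M N : Type*} [CommSemiring R] [AddCommMonoid M] [Module R M] [Module Rᵐᵒᵖ M]
  [IsCentralScalar R M]

theorem inr_mul_eq_inr_fst_smul (m : M) (p : TrivSqZeroExt R M) : inr m * p = inr (p.fst • m) := by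
  ext <;> simp

theorem map_surjective [AddCommMonoid N] [Module R N] [Module Rᵐᵒᵖ N] [IsCentralScalar R N]
    {L : M →ₗ[R] N} (hL : Function.Surjective L) : Function.Surjective (map L) := by
  intro p
  obtain ⟨m, hm⟩ := hL p.snd
  exact ⟨inl p.fst + inr m, by simp [hm, inl_fst_add_inr_snd_eq]⟩

theorem finrank_ker_fstHom {K V : Type*} [Field K] [AddCommGroup V] [Module K V] [Module Kᵐᵒᵖ V]
    [IsCentralScalar K V] :
    Module.finrank K (LinearMap.ker (fstHom K K V).toLinearMap) = Module.finrank K V := by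
  have hker : LinearMap.ker (fstHom K K V).toLinearMap = LinearMap.range (inrHom K V) := by
    ext p
    rw [LinearMap.mem_ker, LinearMap.mem_range]
    refine ⟨fun h => ⟨p.snd, ((mem_kerIdeal_iff_inr K V p).mp h).symm⟩, ?_⟩
    rintro ⟨m, rfl⟩
    simp
  rw [hker, LinearMap.finrank_range_of_inj inr_injective]

end TrivSqZeroExt

open MvPowerSeries TrivSqZeroExt

abbrev tringRelations : Ideal (MvPowerSeries (Fin 2) F) :=
  Ideal.span
    {(MvPowerSeries.X (1 : Fin 2)) ^ 2,
     MvPowerSeries.X (1 : Fin 2) * MvPowerSeries.X 0,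
     (MvPowerSeries.X (0 : Fin 2)) ^ 2}

theorem tringRelations_eq : tringRelations F = Ideal.span (Set.range X) ^ 2 := by
  refine le_antisymm ?_ (span_range_X_sq_le fun i j => ?_)
  · simp only [Ideal.span_le, Set.insert_subset_iff, Set.singleton_subset_iff, SetLike.mem_coe]
    exact ⟨X_sq_mem_span_range_X_sq 1, X_mul_X_mem_span_range_X_sq 1 0, X_sq_mem_span_range_X_sq 0⟩
  · fin_cases i <;> fin_cases j <;> exact Ideal.subset_span (by simp [sq, mul_comm])

def tringEquiv : Tring F ≃ₐ[F] TrivSqZeroExt F (Fin 2 → F) :=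
  (Ideal.quotientEquivAlgOfEq F ((tringRelations_eq F).trans ker_firstOrderJet.symm)).trans
    (Ideal.quotientKerAlgEquivOfSurjective firstOrderJet_surjective)

theorem tringEquiv_mk (f : MvPowerSeries (Fin 2) F) :
    tringEquiv F (Ideal.Quotient.mk _ f) = firstOrderJet (Fin 2) F f := by
  rw [tringEquiv, AlgEquiv.trans_apply, Ideal.quotientEquivAlgOfEq_mk]
  rfl

abbrev einfRelations : Ideal (MvPowerSeries (Fin 3) F) :=
  Ideal.span
    {(MvPowerSeries.X (2 : Fin 3)) ^ 2 - (MvPowerSeries.X 0) ^ 2,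
     MvPowerSeries.X (2 : Fin 3) * MvPowerSeries.X 0 - (MvPowerSeries.X 0) ^ 2,
     MvPowerSeries.X (1 : Fin 3) * MvPowerSeries.X 2}

theorem einfRelations_le_span_range_X_sq : einfRelations F ≤ Ideal.span (Set.range X) ^ 2 := by
  simp only [Ideal.span_le, Set.insert_subset_iff, Set.singleton_subset_iff, SetLike.mem_coe]
  exact ⟨sub_mem (X_sq_mem_span_range_X_sq 2) (X_sq_mem_span_range_X_sq 0),
    sub_mem (X_mul_X_mem_span_range_X_sq 2 0) (X_sq_mem_span_range_X_sq 0),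
    X_mul_X_mem_span_range_X_sq 1 2⟩

theorem span_range_X_sq_le_einfRelations_sup :
    Ideal.span (Set.range X) ^ 2 ≤ einfRelations F ⊔ Ideal.span {X 0 + X 1} := by
  refine span_range_X_sq_le fun i j => ?_
  set J := einfRelations F ⊔ Ideal.span {X 0 + X 1}
  have rel : ∀ g ∈ ({X 2 ^ 2 - X 0 ^ 2, X 2 * X 0 - X 0 ^ 2, X 1 * X 2} : Set _),
      Ideal.Quotient.mk J g = 0 :=
    fun g hg => Ideal.Quotient.eq_zero_iff_mem.mpr (Ideal.mem_sup_left (Ideal.subset_span hg))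
  have hx_add_y : Ideal.Quotient.mk J (X 0 + X 1) = 0 :=
    Ideal.Quotient.eq_zero_iff_mem.mpr (Ideal.mem_sup_right (Ideal.mem_span_singleton_self _))
  simp only [Set.mem_insert_iff, Set.mem_singleton_iff, forall_eq_or_imp, forall_eq, map_sub,
    map_pow, map_mul] at rel
  obtain ⟨hzz_xx, hzx_xx, hyz⟩ := rel
  rw [map_add] at hx_add_y
  rw [← Ideal.Quotient.eq_zero_iff_mem, map_mul]
  set x := Ideal.Quotient.mk J (X 0)
  set y := Ideal.Quotient.mk J (X 1)
  set z := Ideal.Quotient.mk J (X 2)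
  have hxz : x * z = 0 := by linear_combination z * hx_add_y - hyz
  have hxx : x * x = 0 := by linear_combination hxz - hzx_xx
  have hzz : z * z = 0 := by linear_combination hzz_xx + hxx
  have hxy : x * y = 0 := by linear_combination x * hx_add_y - hxx
  have hyy : y * y = 0 := by linear_combination y * hx_add_y - hxy
  fin_cases i <;> fin_cases j <;> first | assumption | (rw [mul_comm]; assumption)

/-- The linear part of the substitution `x ↦ x, y ↦ -x, z ↦ z` of `F[[x,y,z]]` into `F[[x,z]]`. -/
def killXAddY : (Fin 3 → F) →ₗ[F] (Fin 2 → F) where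
  toFun v := ![v 0 - v 1, v 2]
  map_add' v w := by
    ext i
    fin_cases i <;> simp [add_sub_add_comm]
  map_smul' c v := by
    ext i
    fin_cases i <;> simp [mul_sub]

theorem killXAddY_apply (v : Fin 3 → F) : killXAddY F v = ![v 0 - v 1, v 2] := rfl

theorem killXAddY_surjective : Function.Surjective (killXAddY F) := fun w =>
  ⟨![w 0, 0, w 1], by ext i; fin_cases i <;> simp [killXAddY_apply]⟩

def einfJet : MvPowerSeries (Fin 3) F →ₐ[F] TrivSqZeroExt F (Fin 2 → F) :=
  (map (killXAddY F)).comp (firstOrderJet (Fin 3) F)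

theorem ker_einfJet : RingHom.ker (einfJet F) = einfRelations F ⊔ Ideal.span {X 0 + X 1} := by
  refine le_antisymm (fun f hf => ?_) (sup_le ?_ ?_)
  · replace hf : map (killXAddY F) (firstOrderJet (Fin 3) F f) = 0 := hf
    have h0 : constantCoeff f = 0 := by simpa using congrArg fst hf
    have hs := congrArg snd hf
    simp only [snd_map, snd_zero, killXAddY_apply] at hs
    have h1 : coeff (Finsupp.single 0 1) f = coeff (Finsupp.single 1 1) f := by
      simpa [sub_eq_zero] using congrFun hs 0
    have h2 : coeff (Finsupp.single 2 1) f = 0 := by simpa using congrFun hs 1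
    set c := coeff (Finsupp.single 0 1) f
    have hlin : f - C c * (X 0 + X 1) ∈ RingHom.ker (firstOrderJet (Fin 3) F) := by
      rw [RingHom.mem_ker]
      ext j
      · simp [h0]
      · fin_cases j <;> simp [coeff_X, Finsupp.single_left_inj one_ne_zero, h1, h2, c]
    rw [ker_firstOrderJet] at hlin
    simpa using add_mem (span_range_X_sq_le_einfRelations_sup F hlin)
      (Ideal.mem_sup_right (Ideal.mul_mem_left _ (C c) (Ideal.mem_span_singleton_self _)))
  · refine (einfRelations_le_span_range_X_sq F).trans ?_
    rw [← ker_firstOrderJet]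
    intro f hf
    simp [einfJet, RingHom.mem_ker.mp hf]
  · rw [Ideal.span_le, Set.singleton_subset_iff, SetLike.mem_coe, RingHom.mem_ker]
    ext j
    · simp [einfJet]
    · fin_cases j <;> simp [einfJet, killXAddY_apply, firstOrderJet_X]

theorem einfJet_surjective : Function.Surjective (einfJet F) :=
  (map_surjective (killXAddY_surjective F)).comp firstOrderJet_surjective

theorem isLocalRing_einf : IsLocalRing (Einf F) := by
  have : Nontrivial (Einf F) := Ideal.Quotient.nontrivial_iff.mpr <|
    ne_top_of_le_ne_top (RingHom.ker_ne_top (firstOrderJet (Fin 3) F))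
      ((einfRelations_le_span_range_X_sq F).trans ker_firstOrderJet.ge)
  exact IsLocalRing.of_surjective' (Ideal.Quotient.mk _) Ideal.Quotient.mk_surjective

def einfQuotientEquiv :
    (Einf F ⧸ (Ideal.span {xE F + yE F} : Ideal (Einf F))) ≃ₐ[F] TrivSqZeroExt F (Fin 2 → F) :=
  have hspan : (Ideal.span {xE F + yE F} : Ideal (Einf F)) =
      (Ideal.span {X 0 + X 1}).map (Ideal.Quotient.mkₐ F (einfRelations F)) := by
    rw [Ideal.map_span, Set.image_singleton, map_add]
    rfl
  (Ideal.quotientEquivAlgOfEq F hspan).trans <|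
    (DoubleQuot.quotQuotEquivQuotSupₐ F _ _).trans <|
      (Ideal.quotientEquivAlgOfEq F (ker_einfJet F).symm).trans
        (Ideal.quotientKerAlgEquivOfSurjective (einfJet_surjective F))

theorem map_socT_tringEquiv :
    (socT F).map (tringEquiv F).toLinearEquiv.toLinearMap =
      LinearMap.ker (fstHom F F (Fin 2 → F)).toLinearMap := by
  have hx : tringEquiv F (xT F) = inr (Pi.single 0 1) :=
    (tringEquiv_mk F _).trans (firstOrderJet_X 0)
  have hz : tringEquiv F (zT F) = inr (Pi.single 1 1) :=
    (tringEquiv_mk F _).trans (firstOrderJet_X 1)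
  ext p
  rw [Submodule.map_equiv_eq_comap_symm]
  simp [← (tringEquiv F).injective.eq_iff, hx, hz, inr_mul_eq_inr_fst_smul,
    inr_injective.eq_iff' (inr_zero (R := F) (M := Fin 2 → F))]

theorem stmt11 :
    IsLocalRing (Einf F) ∧
    Nonempty ((Einf F ⧸ (Ideal.span {xE F + yE F} : Ideal (Einf F))) ≃ₐ[F] Tring F) ∧
    Module.finrank F (socT F) = 2 := by
  refine ⟨isLocalRing_einf F, ⟨(einfQuotientEquiv F).trans (tringEquiv F).symm⟩, ?_⟩
  rw [← LinearEquiv.finrank_map_eq (tringEquiv F).toLinearEquiv, map_socT_tringEquiv,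
    finrank_ker_fstHom, Module.finrank_fin_fun]
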